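/- For every ℓ ≥ 1, the maximum number of vertices of a 3-vertex-critical (P_2 + ℓP_1)-free graph is 2ℓ + 1. -/

import Mathlib

open SimpleGraph

/-- `G` is `k`-vertex-critical: `χ(G) = k` and deleting any vertex decreases `χ`. -/
def IsKVertexCritical {V : Type*} (G : SimpleGraph V) (k : ℕ) : Prop :=
  G.chromaticNumber = k ∧ ∀ v : V, (G.induce ({v}ᶜ : Set V)).chromaticNumber < k

/-- `G` has no induced subgraph isomorphic to `H`. -/
def InducedFree {V W : Type*} (G : SimpleGraph V) (H : SimpleGraph W) : Prop :=
  ∀ s : Set V, IsEmpty (G.induce s ≃g H)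

/-- `s` is an independent set of `G`. -/
def IsIndepSet {V : Type*} (G : SimpleGraph V) (s : Set V) : Prop :=
  s.Pairwise fun a b => ¬ G.Adj a b

/-- The graph `P_2 + ℓ P_1`: an edge together with `ℓ` isolated vertices. -/
def P2lP1 (ℓ : ℕ) : SimpleGraph (Fin (ℓ + 2)) := fromEdgeSet {s(0, 1)}

/-- The graph `P_3 + P_1`: a path on three vertices plus an isolated vertex. -/
def P3P1 : SimpleGraph (Fin 4) := fromEdgeSet {s(0, 1), s(1, 2)}

/-- The paw: a triangle with a pendant vertex. -/
def paw : SimpleGraph (Fin 4) := fromEdgeSet {s(0, 1), s(0, 2), s(1, 2), s(2, 3)}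

/-- The join of two graphs: all edges between the two sides are added. -/
def joinG {α β : Type*} (G : SimpleGraph α) (H : SimpleGraph β) : SimpleGraph (α ⊕ β) where
  Adj x y :=
    match x, y with
    | Sum.inl a, Sum.inl b => G.Adj a b
    | Sum.inr a, Sum.inr b => H.Adj a b
    | Sum.inl _, Sum.inr _ => True
    | Sum.inr _, Sum.inl _ => True
  symm := by
    constructor
    rintro (a | a) (b | b) h
    · exact G.adj_symm h
    · trivial
    · trivial
    · exact H.adj_symm h
  loopless := by
    constructor
    rintro (a | a) h
    · exact G.loopless.irrefl a h
    · exact H.loopless.irrefl a h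

/-!
A graph that is not 2-colourable has an odd closed walk, and a shortest one, of length `n`, is an
induced cycle `C_n`: a repeated vertex or a chord would split it into two shorter closed walks, one of
them odd. In a 3-vertex-critical graph every vertex lies on it, since deleting a vertex off the cycle
would leave an odd closed walk, so `|V| ≤ n`. If `n ≥ 2ℓ + 3`, the cycle vertices `0, 1, 3, …, 2ℓ + 1`
induce `P₂ + ℓP₁`; hence `n ≤ 2ℓ + 1`. Conversely `C_{2ℓ+1}` is 3-vertex-critical, and it is
`(P₂ + ℓP₁)`-free because `P₂ + ℓP₁` has `ℓ + 1` independent vertices, whereas an independent set `S`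
of `C_n` is disjoint from its shift `S + 1`, so `2|S| ≤ n`.
-/

namespace SimpleGraph

variable {V W : Type*}

def Embedding.ofLT [LinearOrder W] {H : SimpleGraph W} {G : SimpleGraph V} (f : W → V)
    (hne : ∀ a b, a < b → f a ≠ f b) (hadj : ∀ a b, a < b → (G.Adj (f a) (f b) ↔ H.Adj a b)) :
    H ↪g G where
  toFun := f
  inj' a b h := by
    rcases lt_trichotomy a b with hab | rfl | hab
    · exact absurd h (hne a b hab)
    · rfl
    · exact absurd h.symm (hne b a hab)
  map_rel_iff' {a b} := by
    rcases lt_trichotomy a b with hab | rfl | hab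
    · exact hadj a b hab
    · simp
    · rw [G.adj_comm, H.adj_comm]
      exact hadj b a hab

theorem inducedFree_iff_not_isIndContained {G : SimpleGraph V} {H : SimpleGraph W} :
    InducedFree G H ↔ ¬ H ⊴ G := by
  rw [isIndContained_iff_exists_iso_induce]
  constructor
  · rintro h ⟨s, ⟨e⟩⟩
    exact (h s).false e.symm
  · exact fun h s => ⟨fun e => h ⟨s, ⟨e.symm⟩⟩⟩

theorem P2lP1_adj {ℓ : ℕ} {a b : Fin (ℓ + 2)} :
    (P2lP1 ℓ).Adj a b ↔ a = 0 ∧ b = 1 ∨ a = 1 ∧ b = 0 := by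
  rw [P2lP1, fromEdgeSet_adj, Set.mem_singleton_iff, Sym2.eq_iff]
  constructor
  · exact fun h => h.1
  · rintro (⟨rfl, rfl⟩ | ⟨rfl, rfl⟩) <;> simp

theorem inducedFree_P2lP1_of_forall_isIndepSet_card_le {G : SimpleGraph V} {ℓ : ℕ}
    (h : ∀ t : Finset V, G.IsIndepSet t → t.card ≤ ℓ) : InducedFree G (P2lP1 ℓ) := by
  refine inducedFree_iff_not_isIndContained.mpr fun ⟨f⟩ => ?_
  let t := Finset.univ.map ((Fin.succEmb (ℓ + 1)).trans f.toEmbedding)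
  have ht : G.IsIndepSet t := by
    intro x hx y hy _ hxy
    simp only [t, Finset.coe_map, Finset.coe_univ, Set.image_univ, Set.mem_range] at hx hy
    obtain ⟨i, rfl⟩ := hx
    obtain ⟨j, rfl⟩ := hy
    simp [f.map_adj_iff, P2lP1_adj, Fin.succ_ne_zero] at hxy
  simpa [t] using h t ht

theorem cycleGraph_adj_of_lt {n : ℕ} {a b : Fin n} (hab : a < b) :
    (cycleGraph n).Adj a b ↔ b.val - a.val = 1 ∨ b.val - a.val = n - 1 := by
  rw [cycleGraph_adj', Fin.coe_sub_iff_lt.mpr hab, Fin.coe_sub_iff_le.mpr hab.le]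
  have := b.isLt
  omega

theorem two_mul_card_le_of_isIndepSet_cycleGraph {n : ℕ} (hn : 2 ≤ n) {t : Finset (Fin n)}
    (ht : (cycleGraph n).IsIndepSet t) : 2 * t.card ≤ n := by
  obtain ⟨m, rfl⟩ : ∃ m, n = m + 2 := ⟨n - 2, by omega⟩
  let t' := t.map (Equiv.addRight 1).toEmbedding
  have hdisj : Disjoint t t' := by
    rw [Finset.disjoint_left]
    intro x hx hx'
    obtain ⟨y, hy, rfl⟩ := Finset.mem_map.mp hx'
    exact ht hy hx (by simp) (by simp [cycleGraph_adj])
  calc 2 * t.card = (t ∪ t').card := by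
        rw [Finset.card_union_of_disjoint hdisj, Finset.card_map, two_mul]
    _ ≤ m + 2 := (Finset.card_le_univ _).trans_eq (Fintype.card_fin _)

theorem P2lP1_isIndContained_cycleGraph {ℓ n : ℕ} (hn : 2 * ℓ + 3 ≤ n) :
    P2lP1 ℓ ⊴ cycleGraph n := by
  -- `a ↦ 2a - 1` sends `0, 1, 2, …, ℓ + 1` to `0, 1, 3, …, 2ℓ + 1`, since `2 * 0 - 1 = 0` in `ℕ`.
  refine ⟨Embedding.ofLT (fun a => ⟨2 * a.val - 1, by omega⟩) (fun a b hab => ?_)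
    fun a b hab => ?_⟩
  · simp only [ne_eq, Fin.ext_iff]
    rw [Fin.lt_def] at hab
    omega
  · rw [cycleGraph_adj_of_lt (by rw [Fin.lt_def] at hab ⊢; dsimp only; omega), P2lP1_adj]
    rw [Fin.lt_def] at hab
    simp only [Fin.ext_iff, Fin.val_zero, Fin.val_one]
    omega

theorem cycleGraph_induce_compl_singleton_colorable_two {n : ℕ} (hn : Odd n) (v : Fin n) :
    ((cycleGraph n).induce {v}ᶜ).Colorable 2 := by
  -- Walking around the cycle from `v + 1` to `v - 1`, the parity of the position flips at each
  -- step; across the wrap-around edge `{n - 1, 0}` it flips because `n` is odd.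
  let c : Fin n → Bool := fun x => decide (Even x.val ↔ v < x)
  suffices h : ∀ x y : Fin n, x ≠ v → y ≠ v → x < y → (cycleGraph n).Adj x y → c x ≠ c y by
    refine (Coloring.mk (fun x => c x.1) fun {x y} hxy => ?_).colorable.mono (by simp)
    rw [induce_adj] at hxy
    rcases lt_trichotomy x.1 y.1 with hlt | heq | hlt
    · exact h _ _ x.2 y.2 hlt hxy
    · exact absurd heq hxy.ne
    · exact (h _ _ y.2 x.2 hlt hxy.symm).symm
  intro x y hx hy hxy hadj
  rw [cycleGraph_adj_of_lt hxy] at hadj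
  simp only [c, ne_eq, decide_eq_decide, Nat.even_iff, Fin.lt_def]
  rw [Fin.lt_def] at hxy
  rw [ne_eq, Fin.ext_iff] at hx hy
  have := Nat.odd_iff.mp hn
  have := y.isLt
  omega

theorem isKVertexCritical_cycleGraph_of_odd {n : ℕ} (hn : 2 ≤ n) (hodd : Odd n) :
    IsKVertexCritical (cycleGraph n) 3 :=
  ⟨chromaticNumber_cycleGraph_of_odd n hn hodd, fun v =>
    (cycleGraph_induce_compl_singleton_colorable_two hodd v).chromaticNumber_le.trans_lt
      (by norm_num)⟩

namespace Walk

variable {G : SimpleGraph V} {u : V}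

theorem card_le_length_of_forall_mem_support [Fintype V] (c : G.Walk u u) (hc : 0 < c.length)
    (h : ∀ v, v ∈ c.support) : Fintype.card V ≤ c.length := by
  refine (Fintype.card_le_of_surjective (fun k : Fin c.length => c.getVert k) fun v => ?_).trans_eq
    (Fintype.card_fin _)
  obtain ⟨i, rfl, hi⟩ := mem_support_iff_exists_getVert.mp (h v)
  rcases hi.lt_or_eq with hi | rfl
  · exact ⟨⟨i, hi⟩, rfl⟩
  · exact ⟨⟨0, hc⟩, by simp⟩

theorem mem_support_of_odd_of_colorable_induce_compl {v : V}
    (hv : (G.induce {v}ᶜ).Colorable 2) (c : G.Walk u u) (hc : Odd c.length) : v ∈ c.support := by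
  by_contra hnot
  have hs : ∀ x ∈ c.support, x ∈ ({v}ᶜ : Set V) := fun x hx hxv => hnot (hxv ▸ hx)
  have := two_colorable_iff_forall_loop_even.mp hv _ (c.induce _ hs)
  rw [← length_map (Embedding.induce _).toHom, map_induce] at this
  exact Nat.not_even_iff_odd.mpr hc this

def IsShortestOddLoop (c : G.Walk u u) : Prop :=
  Odd c.length ∧ ∀ (v : V) (w : G.Walk v v), Odd w.length → c.length ≤ w.length

theorem exists_isShortestOddLoop_of_not_colorable_two (h : ¬ G.Colorable 2) :
    ∃ (u : V) (c : G.Walk u u), c.IsShortestOddLoop := by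
  classical
  have hex : ∃ n, ∃ (u : V) (c : G.Walk u u), Odd c.length ∧ c.length = n := by
    simp only [two_colorable_iff_forall_loop_even, not_forall, Nat.not_even_iff_odd] at h
    obtain ⟨u, c, hc⟩ := h
    exact ⟨_, u, c, hc, rfl⟩
  obtain ⟨u, c, hodd, hlen⟩ := Nat.find_spec hex
  exact ⟨u, c, hodd, fun v w hw => hlen ▸ Nat.find_min' hex ⟨v, w, hw, rfl⟩⟩

variable {c : G.Walk u u}

/-- A walk `p` between two vertices of a shortest odd loop `c` closes up, with either arc of `c`,
to two closed walks of total length `c.length + 2 * p.length`; one of them is odd, hence at least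
as long as `c`. -/
theorem IsShortestOddLoop.length_le_or_le (hc : c.IsShortestOddLoop) {i j : ℕ} (hij : i ≤ j)
    (hj : j ≤ c.length) (p : G.Walk (c.getVert i) (c.getVert j)) :
    c.length ≤ j - i + p.length ∨ j - i ≤ p.length := by
  let inner : G.Walk (c.getVert i) (c.getVert i) :=
    (((c.drop i).take (j - i)).copy rfl (by rw [drop_getVert, Nat.add_sub_cancel' hij])).append
      p.reverse
  let outer : G.Walk u u := (c.take i).append (p.append (c.drop j))
  have h_inner : inner.length = j - i + p.length := by
    simp only [inner, length_append, length_copy, take_length, drop_length, length_reverse]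
    omega
  have h_outer : outer.length = i + p.length + (c.length - j) := by
    simp only [outer, length_append, take_length, drop_length]
    omega
  have hodd := Nat.odd_iff.mp hc.1
  rcases Nat.even_or_odd inner.length with he | ho
  · have hmin := hc.2 u outer (Nat.odd_iff.mpr (by rw [Nat.even_iff] at he; omega))
    omega
  · have := hc.2 _ inner ho
    omega

theorem IsShortestOddLoop.getVert_ne (hc : c.IsShortestOddLoop) {i j : ℕ} (hij : i < j)
    (hj : j < c.length) : c.getVert i ≠ c.getVert j := fun h => by
  have := hc.length_le_or_le hij.le hj.le (nil.copy rfl h)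
  simp only [length_copy, length_nil] at this
  omega

theorem IsShortestOddLoop.adj_getVert_iff (hc : c.IsShortestOddLoop) {i j : ℕ} (hij : i < j)
    (hj : j < c.length) :
    G.Adj (c.getVert i) (c.getVert j) ↔ j - i = 1 ∨ j - i = c.length - 1 := by
  refine ⟨fun h => ?_, ?_⟩
  · have := hc.length_le_or_le hij.le hj.le h.toWalk
    rw [length_cons, length_nil] at this
    omega
  · rintro (h | h)
    · obtain rfl : j = i + 1 := by omega
      exact c.adj_getVert_succ (by omega)
    · obtain ⟨rfl, rfl⟩ : i = 0 ∧ j = c.length - 1 := by omega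
      have := c.adj_getVert_succ (i := c.length - 1) (by omega)
      rw [Nat.sub_add_cancel (by omega), getVert_length] at this
      simpa using this.symm

theorem IsShortestOddLoop.cycleGraph_isIndContained (hc : c.IsShortestOddLoop) :
    cycleGraph c.length ⊴ G :=
  ⟨Embedding.ofLT (fun k => c.getVert k) (fun _ b hab => hc.getVert_ne hab b.isLt)
    fun _ b hab => by rw [hc.adj_getVert_iff hab b.isLt, cycleGraph_adj_of_lt hab]⟩

end Walk

theorem card_le_of_isKVertexCritical_three_of_inducedFree_P2lP1 [Fintype V] {G : SimpleGraph V}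
    {ℓ : ℕ} (hG : IsKVertexCritical G 3) (hfree : InducedFree G (P2lP1 ℓ)) :
    Fintype.card V ≤ 2 * ℓ + 1 := by
  obtain ⟨hχ, hdel⟩ := hG
  have hG2 : ¬ G.Colorable 2 := fun h => by
    have := h.chromaticNumber_le
    rw [hχ] at this
    norm_num at this
  have hdel2 (v : V) : (G.induce {v}ᶜ).Colorable 2 :=
    chromaticNumber_le_iff_colorable.mp (Order.le_of_lt_add_one (hdel v))
  obtain ⟨u, c, hc⟩ := Walk.exists_isShortestOddLoop_of_not_colorable_two hG2
  have hcard : Fintype.card V ≤ c.length := c.card_le_length_of_forall_mem_support hc.1.pos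
    fun v => Walk.mem_support_of_odd_of_colorable_induce_compl (hdel2 v) c hc.1
  have hlen : c.length < 2 * ℓ + 3 := by
    by_contra! h
    exact inducedFree_iff_not_isIndContained.mp hfree
      ((P2lP1_isIndContained_cycleGraph h).trans hc.cycleGraph_isIndContained)
  have := Nat.odd_iff.mp hc.1
  omega

end SimpleGraph

theorem max_order_three_critical_P2lP1_free (ℓ : ℕ) (hℓ : 1 ≤ ℓ) :
    (∀ (V : Type) [Fintype V] (G : SimpleGraph V),
        IsKVertexCritical G 3 → InducedFree G (P2lP1 ℓ) → Fintype.card V ≤ 2 * ℓ + 1) ∧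
      ∃ G : SimpleGraph (Fin (2 * ℓ + 1)),
        IsKVertexCritical G 3 ∧ InducedFree G (P2lP1 ℓ) := by
  refine ⟨fun V _ G hG hfree => card_le_of_isKVertexCritical_three_of_inducedFree_P2lP1 hG hfree,
    cycleGraph (2 * ℓ + 1), isKVertexCritical_cycleGraph_of_odd (by omega) (odd_two_mul_add_one ℓ),
    inducedFree_P2lP1_of_forall_isIndepSet_card_le fun t ht => ?_⟩
  have := two_mul_card_le_of_isIndepSet_cycleGraph (by omega) ht
  omega
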